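/- arXiv:0802.2839 — 3 statements merged into one kernel-verified Lean document; each statement's English description precedes it below -/
import Mathlib

section
/- Let S be an ICMOT. Then all runs of S under the lazy operational semantics starting from the initial configuration (init, U_ε) are finite if and only if, for every channel contents U : C → Σ*, all runs of S under the lazy operational semantics starting from (init, U) are finite. (That is, termination and structural termination coincide for insertion channel machines.) -/
/-- Transition labels of a channel machine: write `c!a`, read `c?a`,
emptiness test `c=∅`, and occurrence test `a∉c`. -/
inductive Label (A C : Type) : Type
  | write : C → A → Label A C
  | read  : C → A → Label A C
  | emp   : C → Label A C
  | notin : A → C → Label A C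

/-- An insertion channel machine with occurrence testing (ICMOT):
an initial state and a finite transition relation `Δ ⊆ Q × L × Q`. -/
structure ICMOT (Q A C : Type) : Type where
  init : Q
  Δ : Finset (Q × Label A C × Q)

/-- The lazy operational semantics of an ICMOT: an `L`-labelled transition
relation on configurations `(q, U)` with `U : C → List A` the channel contents. -/
inductive LazyStep {Q A C : Type} (M : ICMOT Q A C) :
    Q × (C → List A) → Label A C → Q × (C → List A) → Prop
  | write {q q' : Q} {c : C} {a : A} {U U' : C → List A} :
      (q, Label.write c a, q') ∈ M.Δ →
      U' c = U c ++ [a] → (∀ d, d ≠ c → U' d = U d) →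
      LazyStep M (q, U) (Label.write c a) (q', U')
  | read {q q' : Q} {c : C} {a : A} {U U' : C → List A} :
      (q, Label.read c a, q') ∈ M.Δ →
      U c = a :: U' c → (∀ d, d ≠ c → U' d = U d) →
      LazyStep M (q, U) (Label.read c a) (q', U')
  | readLazy {q q' : Q} {c : C} {a : A} {U : C → List A} :
      (q, Label.read c a, q') ∈ M.Δ →
      LazyStep M (q, U) (Label.read c a) (q', U)
  | emp {q q' : Q} {c : C} {U : C → List A} :
      (q, Label.emp c, q') ∈ M.Δ → U c = [] →
      LazyStep M (q, U) (Label.emp c) (q', U)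
  | notin {q q' : Q} {c : C} {a : A} {U : C → List A} :
      (q, Label.notin a c, q') ∈ M.Δ → a ∉ U c →
      LazyStep M (q, U) (Label.notin a c) (q', U)

/-- `LazyRun M σ λ σ'` : a finite run from `σ` to `σ'` along the label word `λ`. -/
inductive LazyRun {Q A C : Type} (M : ICMOT Q A C) :
    Q × (C → List A) → List (Label A C) → Q × (C → List A) → Prop
  | nil (σ : Q × (C → List A)) : LazyRun M σ [] σ
  | cons {σ τ σ' : Q × (C → List A)} {l : Label A C} {ls : List (Label A C)} :
      LazyStep M σ l τ → LazyRun M τ ls σ' → LazyRun M σ (l :: ls) σ'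

lemma step_mono {Q A C : Type} (M : ICMOT Q A C)
    {q q' : Q} {lab : Label A C} {U U' V : C → List A}
    (h : LazyStep M (q, U) lab (q', U')) (hV : ∀ c, V c <:+ U c) :
    ∃ V', LazyStep M (q, V) lab (q', V') ∧ ∀ c, V' c <:+ U' c := by
  classical
  cases h with
  | @write _ _ c a _ _ hΔ hc hd =>
    refine ⟨fun d => if d = c then V c ++ [a] else V d,
      LazyStep.write hΔ (by simp) (fun d hdc => by simp [hdc]), fun d => ?_⟩
    by_cases hdc : d = c
    · subst hdc
      obtain ⟨t, ht⟩ := hV d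
      exact hc ▸ ⟨t, by simp [← List.append_assoc, ht]⟩
    · simpa [hdc, hd d hdc] using hV d
  | @read _ _ c a _ _ hΔ hc hd =>
    rcases (List.suffix_cons_iff.mp (hc ▸ hV c)) with heq | hsuf
    · refine ⟨fun d => if d = c then U' c else V d,
        LazyStep.read hΔ (by simpa using heq) (fun d hdc => by simp [hdc]),
        fun d => ?_⟩
      by_cases hdc : d = c
      · subst hdc; simp
      · simpa [hdc, hd d hdc] using hV d
    · refine ⟨V, LazyStep.readLazy hΔ, fun d => ?_⟩
      by_cases hdc : d = c
      · subst hdc; exact hsuf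
      · rw [hd d hdc]; exact hV d
  | readLazy hΔ => exact ⟨V, LazyStep.readLazy hΔ, hV⟩
  | @emp _ _ c _ hΔ hc =>
    have : V c = [] := List.suffix_nil.mp (hc ▸ hV c)
    exact ⟨V, LazyStep.emp hΔ this, hV⟩
  | @notin _ _ c a _ hΔ ha =>
    exact ⟨V, LazyStep.notin hΔ (fun hm => ha ((hV c).sublist.subset hm)), hV⟩

lemma run_of_run {Q A C : Type} (M : ICMOT Q A C)
    (τ : ℕ → Q × (C → List A)) (l : ℕ → Label A C)
    (hs : ∀ k, LazyStep M (τ k) (l k) (τ (k + 1)))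
    (V0 : C → List A) (hV : ∀ c, V0 c <:+ (τ 0).2 c) :
    ∃ τ' : ℕ → Q × (C → List A), τ' 0 = ((τ 0).1, V0) ∧
      ∀ k, LazyStep M (τ' k) (l k) (τ' (k + 1)) := by
  have key : ∀ k (σ : Q × (C → List A)), σ.1 = (τ k).1 →
      (∀ c, σ.2 c <:+ (τ k).2 c) →
      ∃ σ', LazyStep M σ (l k) σ' ∧ σ'.1 = (τ (k + 1)).1 ∧
        ∀ c, σ'.2 c <:+ (τ (k + 1)).2 c := by
    intro k σ h1 h2
    have hstep : LazyStep M ((τ k).1, (τ k).2) (l k) ((τ (k+1)).1, (τ (k+1)).2) := hs k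
    obtain ⟨V', hst, hsuf⟩ := step_mono M hstep h2
    refine ⟨((τ (k+1)).1, V'), ?_, rfl, hsuf⟩
    have : σ = (σ.1, σ.2) := rfl
    rw [this, h1]
    exact hst
  let g : (k : ℕ) → {σ : Q × (C → List A) // σ.1 = (τ k).1 ∧ ∀ c, σ.2 c <:+ (τ k).2 c} :=
    fun k => Nat.rec ⟨((τ 0).1, V0), rfl, hV⟩
      (fun n ih => ⟨Classical.choose (key n ih.1 ih.2.1 ih.2.2),
        (Classical.choose_spec (key n ih.1 ih.2.1 ih.2.2)).2⟩) k
  refine ⟨fun k => (g k).1, rfl, fun k => ?_⟩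
  exact (Classical.choose_spec (key k (g k).1 (g k).2.1 (g k).2.2)).1

/-- **Termination and structural termination coincide for ICMOTs.**
All runs from the initial configuration `(init, U_ε)` are finite (no infinite
run exists) iff for every initial channel contents `U`, all runs from
`(init, U)` are finite. -/
theorem stmt_5 {Q A C : Type} [Fintype Q] [Fintype A] [Fintype C]
    (M : ICMOT Q A C) :
    (¬ ∃ (τ : ℕ → Q × (C → List A)) (l : ℕ → Label A C),
        τ 0 = (M.init, fun _ => []) ∧
        ∀ k : ℕ, LazyStep M (τ k) (l k) (τ (k + 1)))
    ↔ ∀ U : C → List A,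
        ¬ ∃ (τ : ℕ → Q × (C → List A)) (l : ℕ → Label A C),
          τ 0 = (M.init, U) ∧
          ∀ k : ℕ, LazyStep M (τ k) (l k) (τ (k + 1)) := by
  constructor
  · rintro h U ⟨τ, l, h0, hs⟩
    apply h
    obtain ⟨τ', h0', hs'⟩ := run_of_run M τ l hs (fun _ => []) (fun c => List.nil_suffix)
    exact ⟨τ', l, by rw [h0', h0], hs'⟩
  · intro h
    exact h (fun _ => [])
end

section
/- Let S be an ICMOT and let (q,U) →_l (q',U') be a transition of its lazy operational semantics. Let V : C → Σ* be channel contents such that V(c) is a subword of U(c) for every c ∈ C. Then there exists V' : C → Σ* with V'(c) a subword of U'(c) for every c ∈ C, such that (q,V) →_l (q',V') is also a transition of the lazy operational semantics. -/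
open Function

theorem forall_update_sublist {A C : Type} [DecidableEq C] {U U' V : C → List A} {c : C}
    {W : List A} (hU : ∀ d, d ≠ c → U' d = U d) (hV : ∀ d, List.Sublist (V d) (U d))
    (hW : List.Sublist W (U' c)) : ∀ d, List.Sublist (update V c W d) (U' d) := by
  intro d
  rcases eq_or_ne d c with rfl | hdc
  · simpa using hW
  · rw [update_of_ne hdc, hU d hdc]
    exact hV d

theorem LazyStep.exists_sublist_of_read {Q A C : Type} {M : ICMOT Q A C} {q q' : Q} {c : C}
    {a : A} {U U' V : C → List A} (hΔ : (q, Label.read c a, q') ∈ M.Δ) (hc : U c = a :: U' c)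
    (hU : ∀ d, d ≠ c → U' d = U d) (hV : ∀ d, List.Sublist (V d) (U d)) :
    ∃ V' : C → List A, (∀ d, List.Sublist (V' d) (U' d)) ∧
      LazyStep M (q, V) (Label.read c a) (q', V') := by
  classical
  rcases List.sublist_cons_iff.mp (hc ▸ hV c) with hVc | ⟨r, hr, hrU⟩
  · refine ⟨V, ?_, .readLazy hΔ⟩
    simpa using forall_update_sublist hU hV hVc
  · exact ⟨update V c r, forall_update_sublist hU hV hrU,
      .read hΔ (by simp [hr]) fun d hdc => update_of_ne hdc _ _⟩

theorem stmt_6_general {Q A C : Type}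
    (M : ICMOT Q A C) (q q' : Q) (U U' V : C → List A) (l : Label A C)
    (hstep : LazyStep M (q, U) l (q', U'))
    (hsub : ∀ c : C, List.Sublist (V c) (U c)) :
    ∃ V' : C → List A, (∀ c : C, List.Sublist (V' c) (U' c)) ∧
      LazyStep M (q, V) l (q', V') := by
  classical
  cases hstep with
  | write hΔ hc hU =>
    exact ⟨update V _ (V _ ++ [_]), forall_update_sublist hU hsub (hc ▸ (hsub _).append_right _),
      .write hΔ (update_self ..) fun d hdc => update_of_ne hdc _ _⟩
  | read hΔ hc hU => exact LazyStep.exists_sublist_of_read hΔ hc hU hsub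
  | readLazy hΔ => exact ⟨V, hsub, .readLazy hΔ⟩
  | emp hΔ hc => exact ⟨V, hsub, .emp hΔ (List.sublist_nil.mp (hc ▸ hsub _))⟩
  | notin hΔ hc => exact ⟨V, hsub, .notin hΔ fun ha => hc ((hsub _).mem ha)⟩

/-- **Downward simulation for subword channel contents.** If `(q,U) →_l (q',U')`
is a lazy transition and `V c` is a (scattered) subword of `U c` for every
channel `c`, then there is `V'` with `V' c` a subword of `U' c` for all `c`
such that `(q,V) →_l (q',V')` is also a lazy transition. -/
theorem stmt_6 {Q A C : Type} [Fintype Q] [Fintype A] [Fintype C]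
    (M : ICMOT Q A C) (q q' : Q) (U U' V : C → List A) (l : Label A C)
    (hstep : LazyStep M (q, U) l (q', U'))
    (hsub : ∀ c : C, List.Sublist (V c) (U c)) :
    ∃ V' : C → List A, (∀ c : C, List.Sublist (V' c) (U' c)) ∧
      LazyStep M (q, V) l (q', V') :=
  stmt_6_general M q q' U U' V l hstep hsub
end

section
/- Let S be an ICMOT and let σ_0 →_{l_0} σ_1 →_{l_1} ⋯ →_{l_{m-1}} σ_m be a finite run of S under the lazy operational semantics, with σ_k = (q_k, U_k). Suppose that l_i = c!a and l_j = a∉c for some indices i < j < m, some channel c ∈ C and some letter a ∈ Σ. Then j ≥ i + 2, and the length of U_i(c) is at most j − i − 2. -/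

private lemma write_step {Q A C : Type} {M : ICMOT Q A C}
    {p p' : Q × (C → List A)} {c : C} {a : A}
    (h : LazyStep M p (Label.write c a) p') : p'.2 c = p.2 c ++ [a] := by
  cases h with
  | write hmem h1 h2 => exact h1

private lemma notin_step {Q A C : Type} {M : ICMOT Q A C}
    {p p' : Q × (C → List A)} {c : C} {a : A}
    (h : LazyStep M p (Label.notin a c) p') : a ∉ p.2 c := by
  cases h with
  | notin hmem h1 => exact h1

private lemma step_chan {Q A C : Type} {M : ICMOT Q A C}
    {p p' : Q × (C → List A)} {lab : Label A C}
    (h : LazyStep M p lab p') (c : C) :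
    p'.2 c = p.2 c ∨ (∃ b, p'.2 c = p.2 c ++ [b]) ∨ (∃ x, p.2 c = x :: p'.2 c) := by
  cases h with
  | @write _ _ c' b _ _ hmem h1 h2 =>
    by_cases hc : c' = c
    · subst hc; exact Or.inr (Or.inl ⟨b, h1⟩)
    · exact Or.inl (h2 c (fun h => hc h.symm))
  | @read _ _ c' b _ _ hmem h1 h2 =>
    by_cases hc : c' = c
    · subst hc; exact Or.inr (Or.inr ⟨b, h1⟩)
    · exact Or.inl (h2 c (fun h => hc h.symm))
  | readLazy hmem => exact Or.inl rfl
  | emp hmem h1 => exact Or.inl rfl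
  | notin hmem h1 => exact Or.inl rfl

/-- If in a finite run a write `c!a` occurs at step `i` and an occurrence test
`a∉c` occurs at a later step `j < m`, then `j ≥ i + 2` and the length of
channel `c` just before step `i` is at most `j - i - 2`. -/
theorem stmt_8 {Q A C : Type} [Fintype Q] [Fintype A] [Fintype C]
    (M : ICMOT Q A C) (m : ℕ)
    (σ : ℕ → Q × (C → List A)) (l : ℕ → Label A C)
    (hrun : ∀ k, k < m → LazyStep M (σ k) (l k) (σ (k + 1)))
    (i j : ℕ) (hij : i < j) (hjm : j < m) (c : C) (a : A)
    (hli : l i = Label.write c a) (hlj : l j = Label.notin a c) :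
    i + 2 ≤ j ∧ ((σ i).2 c).length ≤ j - i - 2 := by
  set len := ((σ i).2 c).length with hlen
  suffices h : i + len + 2 ≤ j by
    constructor
    · omega
    · omega
  by_contra hcon
  push_neg at hcon
  have key : ∀ t, i + 1 + t ≤ j →
      ∃ u v, (σ (i + 1 + t)).2 c = u ++ a :: v ∧ len ≤ t + u.length := by
    intro t
    induction t with
    | zero =>
      intro _
      have hs := hrun i (by omega)
      rw [hli] at hs
      have h1 := write_step hs
      exact ⟨(σ i).2 c, [], by simpa using h1, by omega⟩
    | succ t ih =>
      intro ht
      obtain ⟨u, v, heq, hul⟩ := ih (by omega)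
      have hs := hrun (i + 1 + t) (by omega)
      have hk : i + 1 + (t + 1) = (i + 1 + t) + 1 := by omega
      rw [hk]
      rcases step_chan hs c with h1 | ⟨b, h1⟩ | ⟨x, h1⟩
      · exact ⟨u, v, by rw [h1]; exact heq, by omega⟩
      · exact ⟨u, v ++ [b], by rw [h1, heq]; simp, by omega⟩
      · rw [heq] at h1
        cases u with
        | nil =>
          exfalso
          simp at hul
          omega
        | cons x' u' =>
          simp at h1
          exact ⟨u', v, h1.2.symm, by simp at hul ⊢; omega⟩
  obtain ⟨u, v, heq, _⟩ := key (j - (i + 1)) (by omega)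
  have hj : i + 1 + (j - (i + 1)) = j := by omega
  rw [hj] at heq
  have hs := hrun j hjm
  rw [hlj] at hs
  have h1 := notin_step hs
  rw [heq] at h1
  simp at h1
end
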